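/- Let μ_n denote normalized Lebesgue measure (density n!) on the simplex Δ_n = {0 ≤ x_1 ≤ ... ≤ x_n ≤ 1}. For any Borel set B ⊆ Δ_n and t > 0, the μ_n-measure of {x ∈ Δ_n : exp(sA_n)x ∈ Δ_n for all s ∈ [0,t] and exp(tA_n)x ∈ B} equals e^{-2nt}·μ_n(B). -/

import Mathlib

/-
For `s ≤ 0` the matrix `exp (s A_n)` maps monotone vectors to monotone vectors: with `D` the
difference matrix, `A_n = B D` for a discrete divergence `B`, so `D exp (s A_n) = exp (s D B) D`,
and `s D B` has nonnegative off-diagonal entries, which makes its exponential entrywise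
nonnegative. As the boundary rows of `A_n` vanish, the flow fixes the endpoints `0` and `1`, so
the backward flow maps `Δ_n` into itself. Hence a configuration whose time-`t` image lies in
`B ⊆ Δ_n` stays in `Δ_n` during `[0, t]`, and the set in question is the preimage of `B` under the
time-`t` map. That map is affine with linear part `exp (t A')`, where `A'` is the symmetric
interior block of `A_n`, of trace `2n`; so it multiplies volumes by `e^{2nt}`.
-/

open Matrix MeasureTheory ENNReal

/-- The matrix `A_n` from the paper: `(n+2) × (n+2)`, first and last rows zero,
interior row `i` (for `1 ≤ i ≤ n`) has entries `-1, 2, -1` in columns `i-1, i, i+1`. -/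
noncomputable def coarseningMatrix (n : ℕ) : Matrix (Fin (n + 2)) (Fin (n + 2)) ℝ :=
  fun i j =>
    if (i : ℕ) = 0 ∨ (i : ℕ) = n + 1 then 0
    else if j = i then 2
    else if (j : ℕ) + 1 = (i : ℕ) ∨ (i : ℕ) + 1 = (j : ℕ) then -1
    else 0

/-- The simplex of `n` free coordinates `0 ≤ x_1 ≤ ⋯ ≤ x_n ≤ 1`. -/
def freeSimplex (n : ℕ) : Set (Fin n → ℝ) :=
  {x | Monotone x ∧ ∀ i, x i ∈ Set.Icc (0 : ℝ) 1}

/-- The time-`t` flow map `exp(tA_n)` acting on the `n` free coordinates, with the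
frozen endpoint particles `x_0 = 0` and `x_{n+1} = 1` appended. -/
noncomputable def flowMap (n : ℕ) (t : ℝ) (x : Fin n → ℝ) : Fin n → ℝ :=
  fun i =>
    (NormedSpace.exp (t • coarseningMatrix n)).mulVec
      (Fin.cons 0 (Fin.snoc x 1)) i.succ.castSucc

section FinTuple

variable {α : Type*} [Preorder α] {n : ℕ} {x : Fin n → α} {a : α}

theorem Fin.monotone_cons_of_le (hx : Monotone x) (ha : ∀ i, a ≤ x i) :
    Monotone (Fin.cons a x : Fin (n + 1) → α) := by
  intro i j hij
  induction j using Fin.cases with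
  | zero => rw [Fin.le_zero_iff.mp hij]
  | succ j =>
    induction i using Fin.cases with
    | zero => exact ha j
    | succ i => exact hx (Fin.succ_le_succ_iff.mp hij)

theorem Fin.monotone_snoc_of_le (hx : Monotone x) (ha : ∀ i, x i ≤ a) :
    Monotone (Fin.snoc x a : Fin (n + 1) → α) := by
  intro i j hij
  induction j using Fin.lastCases with
  | last =>
    induction i using Fin.lastCases with
    | last => simp
    | cast i => simpa using ha i
  | cast j =>
    obtain ⟨i, rfl⟩ :=
      Fin.exists_castSucc_eq.mpr (Fin.ne_last_of_lt (hij.trans_lt (Fin.castSucc_lt_last j)))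
    simpa using hx (Fin.castSucc_le_castSucc_iff.mp hij)

end FinTuple

namespace Matrix

section Exp

variable {m p : Type*} [Fintype m] [DecidableEq m] [Fintype p] [DecidableEq p]

theorem hasSum_exp (A : Matrix m m ℝ) :
    HasSum (fun k : ℕ => (k.factorial : ℝ)⁻¹ • A ^ k) (NormedSpace.exp A) := by
  let : NormedRing (Matrix m m ℝ) := Matrix.linftyOpNormedRing
  let : NormedAlgebra ℝ (Matrix m m ℝ) := Matrix.linftyOpNormedAlgebra
  exact NormedSpace.exp_series_hasSum_exp' A

theorem exp_apply (A : Matrix m m ℝ) (i j : m) :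
    NormedSpace.exp A i j = ∑' k : ℕ, (k.factorial : ℝ)⁻¹ * (A ^ k) i j :=
  (Pi.hasSum.mp (Pi.hasSum.mp (hasSum_exp A) i) j).tsum_eq.symm

theorem exp_mul_eq_mul_exp_of_mul_eq {A : Matrix m m ℝ} {B : Matrix m p ℝ} {C : Matrix p p ℝ}
    (h : A * B = B * C) : NormedSpace.exp A * B = B * NormedSpace.exp C := by
  have hpow (k : ℕ) : A ^ k * B = B * C ^ k := by
    induction k with
    | zero => simp
    | succ k ih => rw [pow_succ, pow_succ, Matrix.mul_assoc, h, ← Matrix.mul_assoc, ih,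
        Matrix.mul_assoc]
  have hA :=
    (hasSum_exp A).map (addMonoidHomMulRight B) (continuous_id.matrix_mul continuous_const)
  have hC :=
    (hasSum_exp C).map (addMonoidHomMulLeft B) (continuous_const.matrix_mul continuous_id)
  refine hA.unique (hC.congr_fun fun k => ?_)
  simp [addMonoidHomMulLeft, addMonoidHomMulRight, hpow]

theorem exp_apply_nonneg {A : Matrix m m ℝ} (hA : ∀ i j, 0 ≤ A i j) (i j : m) :
    0 ≤ NormedSpace.exp A i j := by
  have hpow (k : ℕ) : ∀ i j, 0 ≤ (A ^ k) i j := by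
    induction k with
    | zero => intro i j; rw [pow_zero, one_apply]; split_ifs <;> norm_num
    | succ k ih => exact fun i j => Finset.sum_nonneg fun c _ => mul_nonneg (ih i c) (hA c j)
  rw [exp_apply]
  exact tsum_nonneg fun k => mul_nonneg (by positivity) (hpow k i j)

theorem exp_apply_nonneg_of_offDiag_nonneg {A : Matrix m m ℝ} (hA : ∀ i j, i ≠ j → 0 ≤ A i j)
    (i j : m) : 0 ≤ NormedSpace.exp A i j := by
  set c := ∑ k, |A k k|
  have hshift : ∀ k l, 0 ≤ (A + c • 1) k l := by
    intro k l
    rcases eq_or_ne k l with rfl | hkl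
    · have : |A k k| ≤ c := Finset.single_le_sum (f := fun k => |A k k|)
        (fun _ _ => abs_nonneg _) (Finset.mem_univ k)
      simp only [add_apply, smul_apply, one_apply_eq, smul_eq_mul, mul_one]
      linarith [neg_abs_le (A k k)]
    · simpa [one_apply_ne hkl] using hA k l hkl
  have hsplit : A = (-c) • (1 : Matrix m m ℝ) + (A + c • 1) := by module
  rw [hsplit, exp_add_of_commute _ _ ((Commute.one_left _).smul_left _), smul_one_eq_diagonal,
    exp_diagonal, diagonal_mul]
  exact mul_nonneg (by simp [← Real.exp_eq_exp_ℝ, Real.exp_nonneg]) (exp_apply_nonneg hshift i j)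

theorem exp_row_eq_of_row_eq_zero {A : Matrix m m ℝ} {r : m} (hr : A r = 0) :
    NormedSpace.exp A r = Pi.single r 1 := by
  ext j
  rw [exp_apply, tsum_eq_single 0]
  · simp [one_apply, Pi.single_apply, eq_comm]
  · intro k hk
    obtain ⟨k, rfl⟩ := Nat.exists_eq_succ_of_ne_zero hk
    simp [pow_succ', mul_apply, hr]

theorem exp_mulVec_apply_of_row_eq_zero {A : Matrix m m ℝ} {r : m} (hr : A r = 0) (w : m → ℝ) :
    (NormedSpace.exp A *ᵥ w) r = w r := by
  rw [mulVec, exp_row_eq_of_row_eq_zero hr, single_one_dotProduct]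

theorem exp_submatrix_of_row_eq_zero {ι : Type*} [Fintype ι] [DecidableEq ι] {e : ι → m}
    (he : e.Injective) {A : Matrix m m ℝ} (hA : ∀ r ∉ Set.range e, A r = 0) :
    (NormedSpace.exp A).submatrix e e = NormedSpace.exp (A.submatrix e e) := by
  set P : Matrix m ι ℝ := (1 : Matrix m m ℝ).submatrix id e
  have hP (N : Matrix ι ι ℝ) (i j : ι) : (P * N) (e i) j = N i j := by
    simp [P, mul_apply, one_apply, he.eq_iff]
  have hAP : A * P = P * A.submatrix e e := by
    ext r j
    by_cases hr : r ∈ Set.range e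
    · obtain ⟨i, rfl⟩ := hr
      rw [hP]
      simp [P, mul_apply, one_apply]
    · have hne : ∀ i, r ≠ e i := fun i h => hr ⟨i, h.symm⟩
      simp [P, mul_apply, one_apply, hA r hr, hne]
  ext i j
  have := congrFun (congrFun (exp_mul_eq_mul_exp_of_mul_eq hAP) (e i)) j
  rw [hP] at this
  simpa [P, mul_apply, one_apply] using this

theorem nonneg_mulVec_exp_mulVec_of_mul_eq {A : Matrix m m ℝ} {C : Matrix p p ℝ}
    {D : Matrix p m ℝ} (hDA : D * A = C * D) (hC : ∀ i j, i ≠ j → 0 ≤ C i j) {w : m → ℝ}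
    (hw : 0 ≤ D *ᵥ w) : 0 ≤ D *ᵥ (NormedSpace.exp A *ᵥ w) := by
  rw [mulVec_mulVec, ← exp_mul_eq_mul_exp_of_mul_eq hDA.symm, ← mulVec_mulVec]
  exact fun i => Finset.sum_nonneg fun j _ =>
    mul_nonneg (exp_apply_nonneg_of_offDiag_nonneg hC i j) (hw j)

theorem det_exp_of_isHermitian {A : Matrix m m ℝ} (hA : A.IsHermitian) :
    (NormedSpace.exp A).det = Real.exp A.trace := by
  set U : Matrix m m ℝ := (hA.eigenvectorUnitary : Matrix m m ℝ)
  have hU1 : U * star U = 1 := mem_unitaryGroup_iff.mp hA.eigenvectorUnitary.2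
  have hU2 : star U * U = 1 := mem_unitaryGroup_iff'.mp hA.eigenvectorUnitary.2
  have hspec : A = U * diagonal (RCLike.ofReal ∘ hA.eigenvalues) * star U := by
    conv_lhs => rw [hA.spectral_theorem, Unitary.conjStarAlgAut_apply]
  generalize hA.eigenvalues = d at hspec ⊢
  have hexp : NormedSpace.exp A = U * diagonal (fun i => Real.exp (d i)) * star U := by
    rw [hspec]
    refine (exp_units_conj ⟨U, star U, hU1, hU2⟩ _).trans ?_
    rw [exp_diagonal]
    congr
    ext i
    simp [Real.exp_eq_exp_ℝ]
  have htrace : A.trace = ∑ i, d i := by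
    rw [hspec, trace_mul_cycle, hU2, Matrix.one_mul, trace_diagonal]
    simp
  have hdetU : U.det * (star U).det = 1 := by rw [← det_mul, hU1, det_one]
  rw [hexp, det_mul, det_mul, det_diagonal, htrace, Real.exp_sum, mul_right_comm, hdetU, one_mul]

end Exp

variable {m : Type*} [Fintype m]

theorem mulVec_apply_eq_submatrix_mulVec {ι : Type*} [Fintype ι] {e : ι → m} (he : e.Injective)
    (M : Matrix m m ℝ) {v : m → ℝ} (hv : ∀ r ∉ Set.range e, v r = 0) (i : ι) :
    (M *ᵥ v) (e i) = (M.submatrix e e *ᵥ (v ∘ e)) i :=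
  (Fintype.sum_of_injective e he _ _ (fun r hr => by simp [hv r hr]) fun _ => rfl).symm

end Matrix

def diffMatrix (k : ℕ) : Matrix (Fin k) (Fin (k + 1)) ℝ :=
  of fun i => Pi.single i.succ 1 - Pi.single i.castSucc 1

theorem diffMatrix_mul_apply {k : ℕ} {ι : Type*} (M : Matrix (Fin (k + 1)) ι ℝ) (i : Fin k)
    (j : ι) : (diffMatrix k * M) i j = M i.succ j - M i.castSucc j := by
  simp [diffMatrix, mul_apply, sub_mul, Finset.sum_sub_distrib, Pi.single_apply]

theorem diffMatrix_mulVec_apply {k : ℕ} (w : Fin (k + 1) → ℝ) (i : Fin k) :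
    (diffMatrix k *ᵥ w) i = w i.succ - w i.castSucc := by
  simp [diffMatrix, mulVec, dotProduct, sub_mul, Finset.sum_sub_distrib, Pi.single_apply]

theorem monotone_iff_nonneg_diffMatrix_mulVec {k : ℕ} (w : Fin (k + 1) → ℝ) :
    Monotone w ↔ 0 ≤ diffMatrix k *ᵥ w := by
  simp only [Fin.monotone_iff_le_succ, Pi.le_def, Pi.zero_apply, diffMatrix_mulVec_apply,
    sub_nonneg]

def divMatrix (n : ℕ) : Matrix (Fin (n + 2)) (Fin (n + 1)) ℝ :=
  of fun m j =>
    if (m : ℕ) = 0 ∨ (m : ℕ) = n + 1 then 0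
    else if (j : ℕ) + 1 = m then 1
    else if (j : ℕ) = m then -1
    else 0

theorem coarseningMatrix_eq_divMatrix_mul_diffMatrix (n : ℕ) :
    coarseningMatrix n = divMatrix n * diffMatrix (n + 1) := by
  ext m j
  by_cases hm : (m : ℕ) = 0 ∨ (m : ℕ) = n + 1
  · simp only [coarseningMatrix, divMatrix, of_apply, mul_apply, if_pos hm, zero_mul,
      Finset.sum_const_zero]
  have hrow : divMatrix n m = Pi.single ⟨m - 1, by omega⟩ 1 - Pi.single ⟨m, by omega⟩ 1 := by
    ext k
    simp only [divMatrix, of_apply, if_neg hm, Pi.sub_apply, Pi.single_apply, Fin.ext_iff]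
    split_ifs <;> first | omega | norm_num
  rw [mul_apply', hrow, sub_dotProduct, single_one_dotProduct, single_one_dotProduct]
  simp only [coarseningMatrix, diffMatrix, of_apply, if_neg hm, Pi.sub_apply, Pi.single_apply,
    Fin.ext_iff, Fin.val_succ, Fin.val_castSucc]
  split_ifs <;> first | omega | norm_num

theorem diffMatrix_mul_divMatrix_apply_nonpos {n : ℕ} {i j : Fin (n + 1)} (hij : i ≠ j) :
    (diffMatrix (n + 1) * divMatrix n) i j ≤ 0 := by
  rw [diffMatrix_mul_apply]
  simp only [divMatrix, of_apply, Fin.val_succ, Fin.val_castSucc]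
  have := Fin.val_ne_of_ne hij
  split_ifs <;> first | omega | norm_num

theorem monotone_exp_smul_coarseningMatrix_mulVec {n : ℕ} {s : ℝ} (hs : s ≤ 0)
    {w : Fin (n + 2) → ℝ} (hw : Monotone w) :
    Monotone (NormedSpace.exp (s • coarseningMatrix n) *ᵥ w) := by
  rw [monotone_iff_nonneg_diffMatrix_mulVec] at hw ⊢
  refine nonneg_mulVec_exp_mulVec_of_mul_eq (C := s • (diffMatrix (n + 1) * divMatrix n))
    ?_ (fun i j hij => ?_) hw
  · rw [coarseningMatrix_eq_divMatrix_mul_diffMatrix, Matrix.mul_smul, Matrix.smul_mul,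
      Matrix.mul_assoc]
  · exact mul_nonneg_of_nonpos_of_nonpos hs (diffMatrix_mul_divMatrix_apply_nonpos hij)

def interiorEmb (n : ℕ) (i : Fin n) : Fin (n + 2) := i.succ.castSucc

def withEndpoints {n : ℕ} (x : Fin n → ℝ) : Fin (n + 2) → ℝ := Fin.cons 0 (Fin.snoc x 1)

section Flow

variable {n : ℕ}

theorem interiorEmb_strictMono : StrictMono (interiorEmb n) :=
  Fin.strictMono_castSucc.comp Fin.strictMono_succ

theorem zero_notMem_range_interiorEmb : 0 ∉ Set.range (interiorEmb n) := by
  rintro ⟨i, hi⟩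
  simp [interiorEmb, Fin.ext_iff] at hi

theorem last_notMem_range_interiorEmb : Fin.last (n + 1) ∉ Set.range (interiorEmb n) := by
  rintro ⟨i, hi⟩
  simp [interiorEmb, Fin.ext_iff] at hi
  omega

theorem eq_zero_or_eq_last_of_notMem_range_interiorEmb {r : Fin (n + 2)}
    (hr : r ∉ Set.range (interiorEmb n)) : r = 0 ∨ r = Fin.last (n + 1) := by
  by_contra! h
  have h0 : (r : ℕ) ≠ 0 := fun h' => h.1 (Fin.ext h')
  have hlast : (r : ℕ) ≠ n + 1 := fun h' => h.2 (Fin.ext h')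
  exact hr ⟨⟨r - 1, by omega⟩, Fin.ext (by simp [interiorEmb]; omega)⟩

theorem smul_coarseningMatrix_row_eq_zero (t : ℝ) {r : Fin (n + 2)}
    (hr : r ∉ Set.range (interiorEmb n)) : (t • coarseningMatrix n) r = 0 := by
  have hbd : (r : ℕ) = 0 ∨ (r : ℕ) = n + 1 := by
    rcases eq_zero_or_eq_last_of_notMem_range_interiorEmb hr with rfl | rfl <;> simp
  funext j
  rw [Matrix.smul_apply, show coarseningMatrix n r j = 0 from if_pos hbd, smul_zero]
  rfl

@[simp] theorem withEndpoints_zero (x : Fin n → ℝ) : withEndpoints x 0 = 0 := rfl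

@[simp] theorem withEndpoints_last (x : Fin n → ℝ) : withEndpoints x (Fin.last (n + 1)) = 1 := by
  rw [withEndpoints, ← Fin.succ_last, Fin.cons_succ, Fin.snoc_last]

@[simp] theorem withEndpoints_interiorEmb (x : Fin n → ℝ) (i : Fin n) :
    withEndpoints x (interiorEmb n i) = x i := by
  rw [withEndpoints, interiorEmb, ← Fin.succ_castSucc, Fin.cons_succ, Fin.snoc_castSucc]

theorem eq_withEndpoints_of_apply {u : Fin (n + 2) → ℝ} (h0 : u 0 = 0)
    (hlast : u (Fin.last (n + 1)) = 1) :
    u = withEndpoints (u ∘ interiorEmb n) := by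
  ext r
  induction r using Fin.cases with
  | zero => simp [h0]
  | succ r =>
    induction r using Fin.lastCases with
    | last => simp [Fin.succ_last, hlast]
    | cast i => rw [Fin.succ_castSucc, ← interiorEmb, withEndpoints_interiorEmb]; rfl

theorem monotone_withEndpoints_iff (x : Fin n → ℝ) :
    Monotone (withEndpoints x) ↔ x ∈ freeSimplex n := by
  constructor
  · intro h
    refine ⟨fun i j hij => ?_, fun i => ⟨?_, ?_⟩⟩
    · simpa using h (interiorEmb_strictMono.monotone hij)
    · simpa using h (Fin.zero_le (interiorEmb n i))
    · simpa using h (Fin.le_last (interiorEmb n i))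
  · rintro ⟨hmono, hbound⟩
    refine Fin.monotone_cons_of_le (Fin.monotone_snoc_of_le hmono fun i => (hbound i).2)
      fun j => ?_
    induction j using Fin.lastCases with
    | last => simp
    | cast i => simpa using (hbound i).1

theorem flowMap_apply (t : ℝ) (x : Fin n → ℝ) (i : Fin n) :
    flowMap n t x i
      = (NormedSpace.exp (t • coarseningMatrix n) *ᵥ withEndpoints x) (interiorEmb n i) :=
  rfl

theorem exp_smul_coarseningMatrix_mulVec_withEndpoints (t : ℝ) (x : Fin n → ℝ) :
    NormedSpace.exp (t • coarseningMatrix n) *ᵥ withEndpoints x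
      = withEndpoints (flowMap n t x) := by
  refine eq_withEndpoints_of_apply ?_ ?_
  · rw [exp_mulVec_apply_of_row_eq_zero
      (smul_coarseningMatrix_row_eq_zero t zero_notMem_range_interiorEmb), withEndpoints_zero]
  · rw [exp_mulVec_apply_of_row_eq_zero
      (smul_coarseningMatrix_row_eq_zero t last_notMem_range_interiorEmb), withEndpoints_last]

theorem flowMap_zero (x : Fin n → ℝ) : flowMap n 0 x = x := by
  funext i
  rw [flowMap_apply, zero_smul, NormedSpace.exp_zero, one_mulVec, withEndpoints_interiorEmb]

theorem flowMap_add (s t : ℝ) (x : Fin n → ℝ) :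
    flowMap n (s + t) x = flowMap n s (flowMap n t x) := by
  funext i
  rw [flowMap_apply, flowMap_apply, ← exp_smul_coarseningMatrix_mulVec_withEndpoints,
    mulVec_mulVec, add_smul,
    Matrix.exp_add_of_commute _ _ ((Commute.refl _).smul_left _ |>.smul_right _)]

theorem flowMap_mem_freeSimplex_of_nonpos {r : ℝ} (hr : r ≤ 0) {y : Fin n → ℝ}
    (hy : y ∈ freeSimplex n) : flowMap n r y ∈ freeSimplex n := by
  rw [← monotone_withEndpoints_iff, ← exp_smul_coarseningMatrix_mulVec_withEndpoints]
  exact monotone_exp_smul_coarseningMatrix_mulVec hr ((monotone_withEndpoints_iff y).2 hy)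

theorem setOf_flowMap_mem_freeSimplex_eq_preimage {t : ℝ} (ht : 0 ≤ t) {B : Set (Fin n → ℝ)}
    (hB : B ⊆ freeSimplex n) :
    {x ∈ freeSimplex n |
        (∀ s ∈ Set.Icc (0 : ℝ) t, flowMap n s x ∈ freeSimplex n) ∧ flowMap n t x ∈ B}
      = flowMap n t ⁻¹' B := by
  ext x
  refine ⟨fun hx => hx.2.2, fun hx => ?_⟩
  have hstay : ∀ s ∈ Set.Icc (0 : ℝ) t, flowMap n s x ∈ freeSimplex n := by
    intro s hs
    have := flowMap_mem_freeSimplex_of_nonpos (sub_nonpos.2 hs.2) (hB hx)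
    rwa [← flowMap_add, sub_add_cancel] at this
  have hx0 := hstay 0 ⟨le_rfl, ht⟩
  rw [flowMap_zero] at hx0
  exact ⟨hx0, hstay, hx⟩

theorem flowMap_eq_exp_mulVec_add (t : ℝ) (x : Fin n → ℝ) :
    flowMap n t x
      = NormedSpace.exp (t • (coarseningMatrix n).submatrix (interiorEmb n) (interiorEmb n)) *ᵥ x
        + flowMap n t 0 := by
  have he := interiorEmb_strictMono (n := n) |>.injective
  have hdiff (r : Fin (n + 2)) (hr : r ∉ Set.range (interiorEmb n)) :
      (withEndpoints x - withEndpoints 0 : Fin (n + 2) → ℝ) r = 0 := by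
    rcases eq_zero_or_eq_last_of_notMem_range_interiorEmb hr with rfl | rfl <;> simp
  have hinterior :
      (withEndpoints x - withEndpoints 0 : Fin (n + 2) → ℝ) ∘ interiorEmb n = x := by
    funext j
    simp
  funext i
  rw [Pi.add_apply, ← sub_eq_iff_eq_add, flowMap_apply, flowMap_apply, ← Pi.sub_apply,
    ← mulVec_sub, mulVec_apply_eq_submatrix_mulVec he _ hdiff,
    exp_submatrix_of_row_eq_zero he fun _ => smul_coarseningMatrix_row_eq_zero t, hinterior]
  rfl

end Flow

section Jacobian

variable {n : ℕ}

theorem coarseningMatrix_interiorEmb_apply (i j : Fin n) :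
    coarseningMatrix n (interiorEmb n i) (interiorEmb n j)
      = if i = j then 2 else if (i : ℕ) = j + 1 ∨ (j : ℕ) = i + 1 then -1 else 0 := by
  have hint : ¬((interiorEmb n i : ℕ) = 0 ∨ (interiorEmb n i : ℕ) = n + 1) := by
    simp only [interiorEmb, Fin.val_castSucc, Fin.val_succ]
    omega
  simp only [coarseningMatrix]
  rw [if_neg hint]
  simp only [interiorEmb, Fin.ext_iff, Fin.val_castSucc, Fin.val_succ]
  grind

theorem isHermitian_coarseningMatrix_submatrix :
    ((coarseningMatrix n).submatrix (interiorEmb n) (interiorEmb n)).IsHermitian := by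
  ext i j
  simp only [conjTranspose_apply, submatrix_apply, star_trivial,
    coarseningMatrix_interiorEmb_apply, eq_comm (a := j), or_comm]

theorem trace_coarseningMatrix_submatrix :
    ((coarseningMatrix n).submatrix (interiorEmb n) (interiorEmb n)).trace = 2 * n := by
  simp [trace, coarseningMatrix_interiorEmb_apply, mul_comm]

theorem volume_preimage_flowMap (t : ℝ) (B : Set (Fin n → ℝ)) :
    volume (flowMap n t ⁻¹' B) = ENNReal.ofReal (Real.exp (-2 * n * t)) * volume B := by
  set M := NormedSpace.exp (t • (coarseningMatrix n).submatrix (interiorEmb n) (interiorEmb n))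
  have hdet : M.det = Real.exp (2 * n * t) := by
    rw [det_exp_of_isHermitian (isHermitian_coarseningMatrix_submatrix.smul (.all t)),
      trace_smul, trace_coarseningMatrix_submatrix, smul_eq_mul]
    ring_nf
  have hpre : flowMap n t ⁻¹' B = toLin' M ⁻¹' ((· + flowMap n t 0) ⁻¹' B) := by
    ext x
    simp [flowMap_eq_exp_mulVec_add t x, M]
  rw [hpre, Measure.addHaar_preimage_linearMap _ (by rw [LinearMap.det_toLin', hdet]; positivity),
    measure_preimage_add_right, LinearMap.det_toLin', hdet, ← Real.exp_neg,
    abs_of_pos (Real.exp_pos _)]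
  ring_nf

end Jacobian

theorem finite_invariance_general (n : ℕ) (t : ℝ) (ht : 0 < t)
    (B : Set (Fin n → ℝ)) (hB : B ⊆ freeSimplex n) :
    ((n.factorial : ℝ≥0∞) • (volume : Measure (Fin n → ℝ)))
        {x ∈ freeSimplex n |
          (∀ s ∈ Set.Icc (0 : ℝ) t, flowMap n s x ∈ freeSimplex n) ∧ flowMap n t x ∈ B}
      = ENNReal.ofReal (Real.exp (-2 * n * t)) *
          ((n.factorial : ℝ≥0∞) • (volume : Measure (Fin n → ℝ))) B := by
  rw [setOf_flowMap_mem_freeSimplex_eq_preimage ht.le hB, Measure.smul_apply, Measure.smul_apply,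
    volume_preimage_flowMap, smul_eq_mul, smul_eq_mul, mul_left_comm]

/-- The set of configurations that stay in the simplex up to time `t` and land in `B`
at time `t` has normalized-Lebesgue measure `e^{-2nt} μ_n(B)`. -/
theorem finite_invariance (n : ℕ) (t : ℝ) (ht : 0 < t)
    (B : Set (Fin n → ℝ)) (hBm : MeasurableSet B) (hB : B ⊆ freeSimplex n) :
    ((n.factorial : ℝ≥0∞) • (volume : Measure (Fin n → ℝ)))
        {x ∈ freeSimplex n |
          (∀ s ∈ Set.Icc (0 : ℝ) t, flowMap n s x ∈ freeSimplex n) ∧ flowMap n t x ∈ B}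
      = ENNReal.ofReal (Real.exp (-2 * n * t)) *
          ((n.factorial : ℝ≥0∞) • (volume : Measure (Fin n → ℝ))) B :=
  finite_invariance_general n t ht B hB
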